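/- Let a ∈ (−1, 1), m̂ ∈ ℝ, m = m̂/√(1−a²), Z̃ = (0,a) ∈ ℝ², and Z = (0, a, −1)/√(1−a²) ∈ H_S. Suppose q̃ = (x̃,ỹ) : I → D \ {Z̃} is a C² curve satisfying the planar Kepler equation d²q̃/dt² = −m · (‖q̃ − Z̃‖ₐ⁻)^{−3} · (q̃ − Z̃). Let τ ↦ t(τ) solve dt/dτ = 1 − x̃(t)² − ỹ(t)² and set q(τ) := π_H(q̃(t(τ))). Then for every τ, the Minkowski-tangential part of the second derivative satisfies q''(τ) + η(q''(τ), q(τ)) q(τ) = m̂ · (η(q(τ),Z)² − 1)^{−3/2} · (Z + η(q(τ),Z) q(τ)); i.e., the central projection carries solutions of the planar Kepler problem with norm ‖·‖ₐ⁻ and mass m = m̂/√(1−a²) to solutions of the hyperbolic Kepler problem with force function m̂ coth θ_Z. -/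

import Mathlib

/-!
Write `q = (p, -1) / √w` with `p = q̃ ∘ t` and `w = 1 - |p|²`. Since `η(q,q) = -1`, the
tangential projection at `q` kills every multiple of `q`, and the time change `dt/dτ = w` makes
the velocity terms of `q''` cancel: the tangential part of `q''` is `w^{3/2}` times that of
`(q̃''(t), 0)`. Lifting to the plane `z = -1`, `(q̃ - Z̃, 0) = √w • q - √(1-a²) • Z`, whose tangential
part is `-√(1-a²)` times that of `Z`; finally `η(q,Z)² - 1 = (‖q̃ - Z̃‖ₐ⁻ / √w)²` turns the planar
force factor `m / ‖q̃ - Z̃‖ₐ⁻³` into the hyperbolic one.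
-/

noncomputable section

/-- The Minkowski form `η(u,v) = u₁v₁ + u₂v₂ - u₃v₃` on `ℝ³ = ℝ × ℝ × ℝ`. -/
def eta (u v : ℝ × ℝ × ℝ) : ℝ := u.1 * v.1 + u.2.1 * v.2.1 - u.2.2 * v.2.2

/-- The affine norm `‖(x,y)‖ₐ⁻ = √(x² + y²/(1-a²))` on the plane. -/
def normAm (a : ℝ) (p : ℝ × ℝ) : ℝ := Real.sqrt (p.1 ^ 2 + p.2 ^ 2 / (1 - a ^ 2))

/-- Central projection from the unit disc in the plane `{z = -1}` onto the lower
sheet of the hyperboloid `η(q,q) = -1`. -/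
def centralProjH (p : ℝ × ℝ) : ℝ × ℝ × ℝ :=
  (Real.sqrt (1 - p.1 ^ 2 - p.2 ^ 2))⁻¹ • (p.1, p.2, (-1 : ℝ))

theorem eta_comm (u v : ℝ × ℝ × ℝ) : eta u v = eta v u := by
  simp only [eta]; ring

def discFactor (p : ℝ × ℝ) : ℝ := 1 - p.1 ^ 2 - p.2 ^ 2

def planeEmbedding : ℝ × ℝ →L[ℝ] ℝ × ℝ × ℝ :=
  (ContinuousLinearMap.fst ℝ ℝ ℝ).prod
    ((ContinuousLinearMap.inl ℝ ℝ ℝ).comp (ContinuousLinearMap.snd ℝ ℝ ℝ))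

@[simp]
theorem planeEmbedding_apply (u : ℝ × ℝ) : planeEmbedding u = (u.1, u.2, 0) := rfl

theorem centralProjH_eq (p : ℝ × ℝ) :
    centralProjH p = (√(discFactor p))⁻¹ • (planeEmbedding p + (0, 0, -1)) := by
  simp [centralProjH, discFactor]

theorem sqrt_discFactor_smul_centralProjH {p : ℝ × ℝ} (hp : 0 < discFactor p) :
    √(discFactor p) • centralProjH p = planeEmbedding p + (0, 0, -1) := by
  rw [centralProjH_eq, smul_inv_smul₀ (Real.sqrt_pos.mpr hp).ne']

theorem eta_centralProjH_self {p : ℝ × ℝ} (hp : 0 < discFactor p) :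
    eta (centralProjH p) (centralProjH p) = -1 := by
  have hs := Real.sq_sqrt hp.le
  have hs0 := (Real.sqrt_pos.mpr hp).ne'
  simp only [centralProjH_eq, eta, planeEmbedding_apply, Prod.smul_mk, Prod.mk_add_mk,
    smul_eq_mul, add_zero, zero_add]
  field_simp
  rw [hs, discFactor]
  ring

def tangentProj (q : ℝ × ℝ × ℝ) : (ℝ × ℝ × ℝ) →ₗ[ℝ] ℝ × ℝ × ℝ where
  toFun v := v + eta v q • q
  map_add' u v := by
    simp only [eta, Prod.fst_add, Prod.snd_add]; module
  map_smul' c v := by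
    simp only [eta, Prod.smul_fst, Prod.smul_snd, smul_eq_mul, RingHom.id_apply]; module

theorem tangentProj_apply (q v : ℝ × ℝ × ℝ) : tangentProj q v = v + eta v q • q := rfl

theorem tangentProj_self {q : ℝ × ℝ × ℝ} (hq : eta q q = -1) : tangentProj q q = 0 := by
  rw [tangentProj_apply, hq, neg_one_smul, add_neg_cancel]

theorem tangentProj_smul_self_add {q : ℝ × ℝ × ℝ} (hq : eta q q = -1) (c : ℝ)
    (v : ℝ × ℝ × ℝ) : tangentProj q (c • q + v) = tangentProj q v := by
  rw [map_add, map_smul, tangentProj_self hq, smul_zero, zero_add]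

theorem HasDerivAt.discFactor_comp {p : ℝ → ℝ × ℝ} {p' : ℝ × ℝ} {τ : ℝ}
    (hp : HasDerivAt p p' τ) :
    HasDerivAt (fun τ => discFactor (p τ)) (-2 * ((p τ).1 * p'.1 + (p τ).2 * p'.2)) τ := by
  have h₁ := hasFDerivAt_fst.comp_hasDerivAt τ hp
  have h₂ := hasFDerivAt_snd.comp_hasDerivAt τ hp
  refine (((hasDerivAt_const τ 1).sub (h₁.pow 2)).sub (h₂.pow 2)).congr_deriv ?_
  simp only [Function.comp_apply, ContinuousLinearMap.coe_fst', ContinuousLinearMap.coe_snd']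
  ring

theorem HasDerivAt.centralProjH_comp {p : ℝ → ℝ × ℝ} {p' : ℝ × ℝ} {τ : ℝ}
    (hp : HasDerivAt p p' τ) (hd : 0 < discFactor (p τ)) :
    HasDerivAt (fun τ => centralProjH (p τ))
      ((((p τ).1 * p'.1 + (p τ).2 * p'.2) / discFactor (p τ)) • centralProjH (p τ)
        + (√(discFactor (p τ)))⁻¹ • planeEmbedding p') τ := by
  have hs := (Real.sqrt_pos.mpr hd).ne'
  have hinv := (hp.discFactor_comp.sqrt hd.ne').inv hs
  have hQ := (planeEmbedding.hasFDerivAt.comp_hasDerivAt τ hp).add_const ((0, 0, -1) : ℝ × ℝ × ℝ)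
  simp_rw [centralProjH_eq]
  refine (hinv.smul hQ).congr_deriv ?_
  rw [add_comm, smul_smul, Pi.inv_apply]
  congr 2
  rw [Real.sq_sqrt hd.le]
  field_simp

theorem hasDerivAt_centralProjH_reparam {qt : ℝ → ℝ × ℝ} {t : ℝ → ℝ} {τ : ℝ}
    (hqt : DifferentiableAt ℝ qt (t τ)) (ht : HasDerivAt t (discFactor (qt (t τ))) τ)
    (hd : 0 < discFactor (qt (t τ))) :
    HasDerivAt (fun τ => centralProjH (qt (t τ)))
      (((qt (t τ)).1 * (deriv qt (t τ)).1 + (qt (t τ)).2 * (deriv qt (t τ)).2)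
          • centralProjH (qt (t τ))
        + √(discFactor (qt (t τ))) • planeEmbedding (deriv qt (t τ))) τ := by
  refine ((hqt.hasDerivAt.scomp τ ht).centralProjH_comp hd).congr_deriv ?_
  have hs := (Real.sqrt_pos.mpr hd).ne'
  simp only [Function.comp_apply, map_smul, smul_smul, Prod.smul_fst, Prod.smul_snd,
    smul_eq_mul]
  congr 2
  · field_simp
  · field_simp
    exact (Real.sq_sqrt hd.le).symm

theorem tangentProj_deriv_deriv_centralProjH_reparam {qt : ℝ → ℝ × ℝ} {t : ℝ → ℝ}
    (hC2 : ContDiff ℝ 2 qt) (ht : ∀ τ, HasDerivAt t (discFactor (qt (t τ))) τ)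
    (hdisc : ∀ s, 0 < discFactor (qt s)) (τ : ℝ) :
    tangentProj (centralProjH (qt (t τ))) (deriv (deriv (fun τ => centralProjH (qt (t τ)))) τ)
      = √(discFactor (qt (t τ))) ^ 3
          • tangentProj (centralProjH (qt (t τ))) (planeEmbedding (deriv (deriv qt) (t τ))) := by
  have hC2' : ContDiff ℝ (1 + 1) qt := hC2
  rw [contDiff_succ_iff_deriv] at hC2'
  have hqt : Differentiable ℝ qt := hC2'.1
  have hqt' : Differentiable ℝ (deriv qt) := hC2'.2.2.differentiable one_ne_zero
  set g := fun τ => (qt (t τ)).1 * (deriv qt (t τ)).1 + (qt (t τ)).2 * (deriv qt (t τ)).2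
  set s := fun τ => √(discFactor (qt (t τ)))
  have hp : HasDerivAt (fun τ => qt (t τ)) (discFactor (qt (t τ)) • deriv qt (t τ)) τ :=
    (hqt _).hasDerivAt.scomp τ (ht τ)
  have hv : HasDerivAt (fun τ => deriv qt (t τ))
      (discFactor (qt (t τ)) • deriv (deriv qt) (t τ)) τ :=
    (hqt' _).hasDerivAt.scomp τ (ht τ)
  have hg : HasDerivAt g (deriv g τ) τ :=
    ((hp.differentiableAt.fst.mul hv.differentiableAt.fst).add
      (hp.differentiableAt.snd.mul hv.differentiableAt.snd)).hasDerivAt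
  have hs : HasDerivAt s (-(g τ * s τ)) τ := by
    have hd := hdisc (t τ)
    refine (hp.discFactor_comp.sqrt hd.ne').congr_deriv ?_
    simp only [Prod.smul_fst, Prod.smul_snd, smul_eq_mul, g, s]
    have := (Real.sqrt_pos.mpr hd).ne'
    field_simp
    rw [Real.sq_sqrt hd.le]
    ring
  have hLv : HasDerivAt (fun τ => planeEmbedding (deriv qt (t τ)))
      (s τ ^ 2 • planeEmbedding (deriv (deriv qt) (t τ))) τ := by
    refine (planeEmbedding.hasFDerivAt.comp_hasDerivAt τ hv).congr_deriv ?_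
    rw [Real.sq_sqrt (hdisc _).le, ← map_smul]
  have hq : ∀ τ, HasDerivAt (fun τ => centralProjH (qt (t τ)))
      (g τ • centralProjH (qt (t τ)) + s τ • planeEmbedding (deriv qt (t τ))) τ :=
    fun τ => hasDerivAt_centralProjH_reparam (hqt _) (ht τ) (hdisc _)
  have hq'' : HasDerivAt (deriv (fun τ => centralProjH (qt (t τ))))
      ((deriv g τ + g τ ^ 2) • centralProjH (qt (t τ))
        + s τ ^ 3 • planeEmbedding (deriv (deriv qt) (t τ))) τ := by
    rw [funext fun τ => (hq τ).deriv]
    exact ((hg.smul (hq τ)).add (hs.smul hLv)).congr_deriv (by module)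
  rw [hq''.deriv, tangentProj_smul_self_add (eta_centralProjH_self (hdisc _)), map_smul]

theorem discFactor_zero_mk (a : ℝ) : discFactor (0, a) = 1 - a ^ 2 := by
  simp [discFactor]

theorem planeEmbedding_sub {p z : ℝ × ℝ} (hp : 0 < discFactor p) (hz : 0 < discFactor z) :
    planeEmbedding (p - z)
      = √(discFactor p) • centralProjH p - √(discFactor z) • centralProjH z := by
  rw [map_sub, sqrt_discFactor_smul_centralProjH hp, sqrt_discFactor_smul_centralProjH hz,
    add_sub_add_right_eq_sub]

theorem eta_centralProjH_zero_mk_sq_sub_one {p : ℝ × ℝ} {a : ℝ} (hp : 0 < discFactor p)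
    (ha : 0 < 1 - a ^ 2) :
    eta (centralProjH p) (centralProjH (0, a)) ^ 2 - 1
      = (normAm a (p - (0, a)) / √(discFactor p)) ^ 2 := by
  have hN : 0 ≤ p.1 ^ 2 + (p.2 - a) ^ 2 / (1 - a ^ 2) := by positivity
  simp only [centralProjH_eq, discFactor_zero_mk, eta, normAm, planeEmbedding_apply,
    Prod.smul_mk, Prod.mk_add_mk, smul_eq_mul, Prod.fst_sub, Prod.snd_sub, div_pow,
    add_zero, zero_add, sub_zero, Real.sq_sqrt hp.le, Real.sq_sqrt hN]
  have := (Real.sqrt_pos.mpr hp).ne'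
  have := (Real.sqrt_pos.mpr ha).ne'
  field_simp
  rw [Real.sq_sqrt hp.le, Real.sq_sqrt ha.le, discFactor]
  ring

theorem normAm_nonneg (a : ℝ) (p : ℝ × ℝ) : 0 ≤ normAm a p := Real.sqrt_nonneg _

theorem sq_rpow_neg_three_halves {x : ℝ} (hx : 0 ≤ x) :
    (x ^ 2) ^ (-(3 : ℝ) / 2) = (x ^ 3)⁻¹ := by
  rw [← Real.rpow_natCast_mul hx, ← Real.rpow_natCast, ← Real.rpow_neg hx]
  norm_num

theorem eta_centralProjH_zero_mk_sq_sub_one_rpow {p : ℝ × ℝ} {a : ℝ}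
    (hp : 0 < discFactor p) (ha : 0 < 1 - a ^ 2) :
    (eta (centralProjH p) (centralProjH (0, a)) ^ 2 - 1) ^ (-(3 : ℝ) / 2)
      = √(discFactor p) ^ 3 / normAm a (p - (0, a)) ^ 3 := by
  rw [eta_centralProjH_zero_mk_sq_sub_one hp ha,
    sq_rpow_neg_three_halves (div_nonneg (normAm_nonneg _ _) (Real.sqrt_nonneg _)),
    div_pow, inv_div]

theorem kepler_central_projection_hyperbolic_general
    (a : ℝ) (ha₁ : -1 < a) (ha₂ : a < 1)
    (mhat m : ℝ) (hm : m = mhat / Real.sqrt (1 - a ^ 2))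
    (Zt : ℝ × ℝ) (hZt : Zt = (0, a))
    (Z : ℝ × ℝ × ℝ) (hZ : Z = (Real.sqrt (1 - a ^ 2))⁻¹ • ((0 : ℝ), a, (-1 : ℝ)))
    (qt : ℝ → ℝ × ℝ)
    (hdisc : ∀ s, (qt s).1 ^ 2 + (qt s).2 ^ 2 < 1)
    (hC2 : ContDiff ℝ 2 qt)
    (hODE : ∀ s, deriv (deriv qt) s
        = -(m / (normAm a (qt s - Zt)) ^ 3) • (qt s - Zt))
    (t : ℝ → ℝ)
    (ht : ∀ τ, HasDerivAt t (1 - (qt (t τ)).1 ^ 2 - (qt (t τ)).2 ^ 2) τ)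
    (q : ℝ → ℝ × ℝ × ℝ) (hq : q = fun τ => centralProjH (qt (t τ))) :
    ∀ τ, deriv (deriv q) τ + eta (deriv (deriv q) τ) (q τ) • q τ
      = (mhat * (eta (q τ) Z ^ 2 - 1) ^ (-(3 : ℝ) / 2)) •
          (Z + eta (q τ) Z • q τ) := by
  intro τ
  subst hq hZt
  have ha : 0 < 1 - a ^ 2 := by nlinarith
  have hd : ∀ s, 0 < discFactor (qt s) := fun s => by rw [discFactor]; linarith [hdisc s]
  have hZ_eq : Z = centralProjH (0, a) := by rw [hZ, centralProjH]; norm_num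
  have hmhat : mhat = m * √(1 - a ^ 2) := by
    rw [hm, div_mul_cancel₀ _ (Real.sqrt_pos.mpr ha).ne']
  calc _ = tangentProj (centralProjH (qt (t τ)))
        (deriv (deriv (fun τ => centralProjH (qt (t τ)))) τ) := rfl
    _ = √(discFactor (qt (t τ))) ^ 3 • tangentProj (centralProjH (qt (t τ)))
          (planeEmbedding (deriv (deriv qt) (t τ))) :=
      tangentProj_deriv_deriv_centralProjH_reparam hC2 ht hd τ
    _ = _ := by
      beta_reduce
      rw [hODE, map_smul, planeEmbedding_sub (hd _) (by rwa [discFactor_zero_mk]),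
        discFactor_zero_mk, ← hZ_eq, map_smul, map_sub, map_smul, map_smul,
        tangentProj_self (eta_centralProjH_self (hd _)), hZ_eq,
        eta_centralProjH_zero_mk_sq_sub_one_rpow (hd _) ha, hmhat, tangentProj_apply, eta_comm]
      module

/-- The central projection carries solutions of the planar Kepler problem with
norm `‖·‖ₐ⁻` and mass `m = m̂/√(1-a²)` to solutions of the hyperbolic Kepler
problem with force function `m̂ coth θ_Z`. -/
theorem kepler_central_projection_hyperbolic
    (a : ℝ) (ha₁ : -1 < a) (ha₂ : a < 1)
    (mhat m : ℝ) (hm : m = mhat / Real.sqrt (1 - a ^ 2))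
    (Zt : ℝ × ℝ) (hZt : Zt = (0, a))
    (Z : ℝ × ℝ × ℝ) (hZ : Z = (Real.sqrt (1 - a ^ 2))⁻¹ • ((0 : ℝ), a, (-1 : ℝ)))
    (qt : ℝ → ℝ × ℝ)
    (hdisc : ∀ s, (qt s).1 ^ 2 + (qt s).2 ^ 2 < 1)
    (hne : ∀ s, qt s ≠ Zt) (hC2 : ContDiff ℝ 2 qt)
    (hODE : ∀ s, deriv (deriv qt) s
        = -(m / (normAm a (qt s - Zt)) ^ 3) • (qt s - Zt))
    (t : ℝ → ℝ)
    (ht : ∀ τ, HasDerivAt t (1 - (qt (t τ)).1 ^ 2 - (qt (t τ)).2 ^ 2) τ)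
    (q : ℝ → ℝ × ℝ × ℝ) (hq : q = fun τ => centralProjH (qt (t τ))) :
    ∀ τ, deriv (deriv q) τ + eta (deriv (deriv q) τ) (q τ) • q τ
      = (mhat * (eta (q τ) Z ^ 2 - 1) ^ (-(3 : ℝ) / 2)) •
          (Z + eta (q τ) Z • q τ) :=
  kepler_central_projection_hyperbolic_general a ha₁ ha₂ mhat m hm Zt hZt Z hZ qt hdisc hC2 hODE t
    ht q hq
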